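/- Let ℓ > 0, c > 0, and suppose (x_n)_{n≥1} is a sequence of positive reals with x_n → ∞ satisfying tan(x_n ℓ) = c/x_n and x_n ∈ (nπ/ℓ, nπ/ℓ + π/(2ℓ)) for all large n. Then x_n = nπ/ℓ + c/(nπ) + O(1/n²) as n → ∞. -/

import Mathlib

/-!
With `θ = xℓ` the band condition puts `θ - nπ` in `(0, π/2)`, where `tan` inverts, so the
equation becomes `θ - nπ = arctan (cℓ/θ)`. Since `arctan y = y + O(y³)` and, `θ - nπ` being
bounded, `cℓ/θ = cℓ/(nπ) + O(1/n²)`, we get `θ = nπ + cℓ/(nπ) + O(1/n²)`; divide by `ℓ`.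
-/

open Real Set

namespace Real

lemma monotone_sub_arctan : Monotone fun t : ℝ => t - arctan t := by
  refine monotone_of_hasDerivAt_nonneg
    (fun t => (hasDerivAt_id t).sub (hasDerivAt_arctan t)) fun t => ?_
  have : 1 / (1 + t ^ 2) ≤ 1 := div_le_one_of_le₀ (by nlinarith) (by positivity)
  simpa using this

lemma monotone_cube_div_three_sub_add_arctan :
    Monotone fun t : ℝ => t ^ 3 / 3 - t + arctan t := by
  refine monotone_of_hasDerivAt_nonneg (fun t => (((hasDerivAt_pow 3 t).div_const 3).sub
    (hasDerivAt_id t)).add (hasDerivAt_arctan t)) fun t => ?_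
  have hpos : 0 < 1 + t ^ 2 := by positivity
  have : 1 - t ^ 2 ≤ (1 + t ^ 2)⁻¹ := by
    rw [← one_div, le_div_iff₀ hpos]; nlinarith [sq_nonneg (t ^ 2)]
  norm_num
  linarith

lemma abs_arctan_sub_self_le (y : ℝ) : |arctan y - y| ≤ |y| ^ 3 / 3 := by
  rcases le_total 0 y with hy | hy
  · have h₁ := monotone_sub_arctan hy
    have h₂ := monotone_cube_div_three_sub_add_arctan hy
    simp only [arctan_zero] at h₁ h₂
    rw [abs_of_nonneg hy, abs_le]
    constructor <;> linarith
  · have h₁ := monotone_sub_arctan hy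
    have h₂ := monotone_cube_div_three_sub_add_arctan hy
    simp only [arctan_zero] at h₁ h₂
    rw [abs_of_nonpos hy, abs_le]
    constructor <;> nlinarith

lemma abs_arctan_div_sub_div_le {a N θ : ℝ} (hN : 0 < N) (hNθ : N ≤ θ) :
    |arctan (a / θ) - a / N| ≤ (|a| / N) ^ 3 / 3 + |a| * (θ - N) / N ^ 2 := by
  have hθ : 0 < θ := hN.trans_le hNθ
  have h_arctan : |arctan (a / θ) - a / θ| ≤ (|a| / N) ^ 3 / 3 := by
    refine (abs_arctan_sub_self_le _).trans ?_
    rw [abs_div, abs_of_pos hθ]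
    gcongr
  have h_div : |a / θ - a / N| ≤ |a| * (θ - N) / N ^ 2 := by
    rw [div_sub_div _ _ hθ.ne' hN.ne', show a * N - θ * a = -(a * (θ - N)) by ring, abs_div,
      abs_neg, abs_mul, abs_of_nonneg (sub_nonneg.2 hNθ), abs_of_pos (mul_pos hθ hN), sq]
    gcongr
  calc |arctan (a / θ) - a / N| ≤ |arctan (a / θ) - a / θ| + |a / θ - a / N| := abs_sub_le _ _ _
    _ ≤ _ := add_le_add h_arctan h_div

end Real

lemma abs_sub_le_of_tan_eq_div {a θ : ℝ} {n : ℕ} (hn : 0 < n)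
    (hθ : θ ∈ Ioo (n * π) (n * π + π / 2)) (htan : tan θ = a / θ) :
    |θ - (n * π + a / (n * π))| ≤ (|a| ^ 3 / (3 * π ^ 3) + |a| / (2 * π)) / n ^ 2 := by
  have hn' : (1 : ℝ) ≤ n := Nat.one_le_cast.2 hn
  have hN : 0 < n * π := by positivity
  have h_arctan : arctan (a / θ) = θ - n * π := by
    rw [← htan, ← tan_sub_nat_mul_pi]
    exact arctan_tan (by linarith [hθ.1, pi_pos]) (by linarith [hθ.2])
  calc |θ - (n * π + a / (n * π))| = |arctan (a / θ) - a / (n * π)| := by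
        rw [h_arctan, sub_sub]
    _ ≤ (|a| / (n * π)) ^ 3 / 3 + |a| * (θ - n * π) / (n * π) ^ 2 :=
        abs_arctan_div_sub_div_le hN hθ.1.le
    _ ≤ (|a| / (n * π)) ^ 3 / 3 + |a| * (π / 2) / (n * π) ^ 2 := by
        gcongr; linarith [hθ.2]
    _ = |a| ^ 3 / (3 * π ^ 3) / n ^ 3 + |a| / (2 * π) / n ^ 2 := by
        field_simp
    _ ≤ |a| ^ 3 / (3 * π ^ 3) / n ^ 2 + |a| / (2 * π) / n ^ 2 := by
        gcongr
        norm_num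
    _ = _ := by ring

lemma abs_sub_le_of_tan_mul_eq_div {ℓ c x : ℝ} {n : ℕ} (hℓ : 0 < ℓ) (hn : 0 < n)
    (hx : x ∈ Ioo (n * π / ℓ) (n * π / ℓ + π / (2 * ℓ))) (htan : tan (x * ℓ) = c / x) :
    |x - (n * π / ℓ + c / (n * π))| ≤
      (|c * ℓ| ^ 3 / (3 * π ^ 3) + |c * ℓ| / (2 * π)) / ℓ / n ^ 2 := by
  have hθ : x * ℓ ∈ Ioo (n * π) (n * π + π / 2) := by
    constructor
    · rw [← div_lt_iff₀ hℓ]; exact hx.1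
    · rw [← lt_div_iff₀ hℓ]; convert hx.2 using 1; field_simp
  have hN : (n : ℝ) * π ≠ 0 := by positivity
  have key := abs_sub_le_of_tan_eq_div (a := c * ℓ) hn hθ
    (by rw [htan, mul_div_mul_right _ _ hℓ.ne'])
  have h_eq : x - (n * π / ℓ + c / (n * π)) = (x * ℓ - (n * π + c * ℓ / (n * π))) / ℓ := by
    field_simp
  rw [h_eq, abs_div, abs_of_pos hℓ, div_right_comm]
  exact div_le_div_of_nonneg_right key hℓ.le

open Real Filter Asymptotics in
theorem tan_characteristic_roots_asymptotics_general
    (ℓ c : ℝ) (hℓ : 0 < ℓ)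
    (x : ℕ → ℝ)
    (hroot : ∀ n, Real.tan (x n * ℓ) = c / x n)
    (hband : ∀ᶠ n : ℕ in atTop,
        x n ∈ Set.Ioo ((n : ℝ) * π / ℓ) ((n : ℝ) * π / ℓ + π / (2 * ℓ))) :
    (fun n : ℕ => x n - ((n : ℝ) * π / ℓ + c / ((n : ℝ) * π)))
      =O[atTop] (fun n : ℕ => 1 / (n : ℝ) ^ 2) := by
  refine IsBigO.of_bound ((|c * ℓ| ^ 3 / (3 * π ^ 3) + |c * ℓ| / (2 * π)) / ℓ) ?_
  filter_upwards [hband, eventually_gt_atTop 0] with n hx hn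
  rw [norm_of_nonneg (by positivity : (0 : ℝ) ≤ 1 / (n : ℝ) ^ 2), ← div_eq_mul_one_div]
  exact abs_sub_le_of_tan_mul_eq_div hℓ hn hx (hroot n)

open Real Filter Asymptotics in
/-- Asymptotic localization of roots of `tan(xℓ) = c/x` in the bands
`(nπ/ℓ, nπ/ℓ + π/(2ℓ))`: the roots satisfy `x_n = nπ/ℓ + c/(nπ) + O(1/n²)`. -/
theorem tan_characteristic_roots_asymptotics
    (ℓ c : ℝ) (hℓ : 0 < ℓ) (hc : 0 < c)
    (x : ℕ → ℝ) (hxpos : ∀ n, 0 < x n)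
    (hxtop : Tendsto x atTop atTop)
    (hroot : ∀ n, Real.tan (x n * ℓ) = c / x n)
    (hband : ∀ᶠ n : ℕ in atTop,
        x n ∈ Set.Ioo ((n : ℝ) * π / ℓ) ((n : ℝ) * π / ℓ + π / (2 * ℓ))) :
    (fun n : ℕ => x n - ((n : ℝ) * π / ℓ + c / ((n : ℝ) * π)))
      =O[atTop] (fun n : ℕ => 1 / (n : ℝ) ^ 2) :=
  tan_characteristic_roots_asymptotics_general ℓ c hℓ x hroot hband
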